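/- Let p ≥ 2 be even and G=(V,E) a (p,2)-flex-connected graph with unsafe edge set U. If A and B are crossing (p,3)-violated sets and all four corner cuts δ(A∪B), δ(A∩B), δ(A\B), δ(B\A) have cardinality p+2, then E(A\B, B\A) and E(A∩B, V\(A∪B)) are empty, each of the four sets E(A∩B,A\B), E(A∩B,B\A), E(A\B,V\(A∪B)), E(B\A,V\(A∪B)) has cardinality p/2+1, and at least two of the four corner sets A∪B, A∩B, A\B, B\A are (p,3)-violated. -/

import Mathlib

open Finset

variable {V E : Type}

instance {a b : Prop} [Decidable a] [Decidable b] : Decidable (Xor' a b) := by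
  unfold Xor'; infer_instance

/-- The cut of a vertex set `S`: edges with exactly one endpoint in `S`. -/
def cutOf [Fintype E] [DecidableEq V] (ends : E → V × V) (S : Finset V) : Finset E :=
  Finset.univ.filter (fun e => Xor' ((ends e).1 ∈ S) ((ends e).2 ∈ S))

/-- Edges with one endpoint in `X` and the other in `Y`. -/
def btw [Fintype E] [DecidableEq V] (ends : E → V × V) (X Y : Finset V) : Finset E :=
  Finset.univ.filter (fun e =>
    ((ends e).1 ∈ X ∧ (ends e).2 ∈ Y) ∨ ((ends e).1 ∈ Y ∧ (ends e).2 ∈ X))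

/-- `A` and `B` cross. -/
def crosses [Fintype V] [DecidableEq V] (A B : Finset V) : Prop :=
  (A \ B).Nonempty ∧ (A ∩ B).Nonempty ∧ (B \ A).Nonempty ∧ ((A ∪ B)ᶜ).Nonempty

/-- `(p,2)`-flex-connectivity: after removing any at most 2 unsafe edges,
every nonempty proper cut has at least `p` edges. -/
def flexConn [Fintype V] [Fintype E] [DecidableEq V] [DecidableEq E]
    (p : ℕ) (ends : E → V × V) (U : Finset E) : Prop :=
  ∀ F ⊆ U, F.card ≤ 2 → ∀ S : Finset V, S.Nonempty → S ≠ Finset.univ →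
    p ≤ (cutOf ends S \ F).card

/-- A `(p,3)`-violated set: its cut has exactly `p+2` edges, at least 3 unsafe. -/
def violatedSet [Fintype E] [DecidableEq V] [DecidableEq E]
    (p : ℕ) (ends : E → V × V) (U : Finset E) (S : Finset V) : Prop :=
  (cutOf ends S).card = p + 2 ∧ 3 ≤ (cutOf ends S ∩ U).card

instance [Fintype E] [DecidableEq V] [DecidableEq E]
    (p : ℕ) (ends : E → V × V) (U : Finset E) (S : Finset V) :
    Decidable (violatedSet p ends U S) := by unfold violatedSet; infer_instance

/-- `A` amenably crosses `B`. -/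
def amenablyCrosses [Fintype V] [Fintype E] [DecidableEq V] [DecidableEq E]
    (ends : E → V × V) (U : Finset E) (A B : Finset V) : Prop :=
  crosses A B ∧
    (btw ends (A ∩ B) (B \ A) ∩ U = ∅ ∨ btw ends (A \ B) (A ∪ B)ᶜ ∩ U = ∅)

/-!
Every edge counted by the cuts of `A`, `B` and the four corners joins two of the corners
`A \ B`, `A ∩ B`, `B \ A`, `(A ∪ B)ᶜ`, so all six cut sizes are sums of the six numbers of edges
between corners. The four corner cuts count every class twice, while `δ(A)` and `δ(B)` count the
four side classes once and the two diagonal classes `E(A \ B, B \ A)`, `E(A ∩ B, (A ∪ B)ᶜ)` twice;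
as all six cuts have `p + 2` edges, the diagonals are empty and the sides all have `(p + 2) / 2`
edges. Then `δ(A)` and `δ(B)` split the side edges, so the sides carry at least six unsafe edges.
The pair `δ(A ∪ B)`, `δ(A ∩ B)` splits them too, as does the pair `δ(A \ B)`, `δ(B \ A)`, so each
pair contains a cut with at least three unsafe edges.
-/

section Cuts

variable [Fintype E] [DecidableEq V] (ends : E → V × V)

theorem btw_comm (X Y : Finset V) : btw ends X Y = btw ends Y X := by
  ext e
  simp only [_root_.btw, mem_filter, mem_univ, true_and]
  tauto

theorem cutOf_eq_btw_compl [Fintype V] (S : Finset V) : cutOf ends S = btw ends S Sᶜ := by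
  ext e
  simp only [cutOf, _root_.btw, mem_filter, mem_univ, true_and, mem_compl]
  exact xor_def.trans (by tauto)

theorem cutOf_compl [Fintype V] (S : Finset V) : cutOf ends Sᶜ = cutOf ends S := by
  rw [cutOf_eq_btw_compl, cutOf_eq_btw_compl, compl_compl, btw_comm]

theorem disjoint_btw_left {X Y Z : Finset V} (hXY : Disjoint X Y) (hXZ : Disjoint X Z) :
    Disjoint (btw ends X Z) (btw ends Y Z) := by
  rw [disjoint_left] at *
  intro e
  simp only [_root_.btw, mem_filter, mem_univ, true_and]
  have := hXY (a := (ends e).1)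
  have := hXY (a := (ends e).2)
  have := hXZ (a := (ends e).1)
  have := hXZ (a := (ends e).2)
  tauto

variable [DecidableEq E]

theorem btw_union_left (X Y Z : Finset V) :
    btw ends (X ∪ Y) Z = btw ends X Z ∪ btw ends Y Z := by
  ext e
  simp only [_root_.btw, mem_filter, mem_univ, true_and, mem_union]
  tauto

theorem card_btw_union_left_inter {X Y Z : Finset V} (hXY : Disjoint X Y) (hXZ : Disjoint X Z)
    (T : Finset E) :
    #(btw ends (X ∪ Y) Z ∩ T) = #(btw ends X Z ∩ T) + #(btw ends Y Z ∩ T) := by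
  rw [btw_union_left, union_inter_distrib_right, card_union_of_disjoint
    ((disjoint_btw_left ends hXY hXZ).mono inter_subset_left inter_subset_left)]

theorem card_btw_union_right_inter {X Y Z : Finset V} (hYZ : Disjoint Y Z) (hYX : Disjoint Y X)
    (T : Finset E) :
    #(btw ends X (Y ∪ Z) ∩ T) = #(btw ends X Y ∩ T) + #(btw ends X Z ∩ T) := by
  rw [btw_comm, card_btw_union_left_inter ends hYZ hYX, btw_comm ends Y, btw_comm ends Z]

variable [Fintype V]

theorem card_cutOf_inter_eq_of_compl_eq {S X Y Z : Finset V} (hS : Sᶜ = X ∪ Y ∪ Z)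
    (hXY : Disjoint X Y) (hXZ : Disjoint X Z) (hYZ : Disjoint Y Z) (T : Finset E) :
    #(cutOf ends S ∩ T) = #(btw ends S X ∩ T) + #(btw ends S Y ∩ T) + #(btw ends S Z ∩ T) := by
  have hSc : Disjoint (X ∪ Y ∪ Z) S := hS ▸ disjoint_compl_left
  rw [cutOf_eq_btw_compl, hS,
    card_btw_union_right_inter ends (disjoint_union_left.2 ⟨hXZ, hYZ⟩)
      (hSc.mono_left subset_union_left),
    card_btw_union_right_inter ends hXY (hSc.mono_left (subset_union_left.trans subset_union_left))]

theorem card_cutOf_union_inter_eq_of_compl_eq {S S' X Y : Finset V} (hS : (S ∪ S')ᶜ = X ∪ Y)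
    (hSS' : Disjoint S S') (hXY : Disjoint X Y) (T : Finset E) :
    #(cutOf ends (S ∪ S') ∩ T) = #(btw ends S X ∩ T) + #(btw ends S Y ∩ T) +
      #(btw ends S' X ∩ T) + #(btw ends S' Y ∩ T) := by
  have hSc : Disjoint (S ∪ S') (X ∪ Y) := hS ▸ disjoint_compl_right
  rw [cutOf_eq_btw_compl, hS,
    card_btw_union_left_inter ends hSS' (hSc.mono_left subset_union_left),
    card_btw_union_right_inter ends hXY (hSc.mono subset_union_left subset_union_left).symm,
    card_btw_union_right_inter ends hXY (hSc.mono subset_union_right subset_union_left).symm,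
    add_assoc _ _ (#_)]

end Cuts

section Corners

variable [Fintype V] [Fintype E] [DecidableEq V] [DecidableEq E] (ends : E → V × V)
  (A B : Finset V)

theorem card_cutOf_corners_inter (T : Finset E) :
    #(cutOf ends A ∩ T) = #(btw ends (A \ B) (B \ A) ∩ T) + #(btw ends (A \ B) (A ∪ B)ᶜ ∩ T) +
      #(btw ends (A ∩ B) (B \ A) ∩ T) + #(btw ends (A ∩ B) (A ∪ B)ᶜ ∩ T) ∧
    #(cutOf ends B ∩ T) = #(btw ends (A ∩ B) (A \ B) ∩ T) + #(btw ends (A ∩ B) (A ∪ B)ᶜ ∩ T) +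
      #(btw ends (A \ B) (B \ A) ∩ T) + #(btw ends (B \ A) (A ∪ B)ᶜ ∩ T) ∧
    #(cutOf ends (A ∪ B) ∩ T) = #(btw ends (A \ B) (A ∪ B)ᶜ ∩ T) +
      #(btw ends (A ∩ B) (A ∪ B)ᶜ ∩ T) + #(btw ends (B \ A) (A ∪ B)ᶜ ∩ T) ∧
    #(cutOf ends (A ∩ B) ∩ T) = #(btw ends (A ∩ B) (A \ B) ∩ T) +
      #(btw ends (A ∩ B) (B \ A) ∩ T) + #(btw ends (A ∩ B) (A ∪ B)ᶜ ∩ T) ∧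
    #(cutOf ends (A \ B) ∩ T) = #(btw ends (A ∩ B) (A \ B) ∩ T) +
      #(btw ends (A \ B) (B \ A) ∩ T) + #(btw ends (A \ B) (A ∪ B)ᶜ ∩ T) ∧
    #(cutOf ends (B \ A) ∩ T) = #(btw ends (A ∩ B) (B \ A) ∩ T) +
      #(btw ends (A \ B) (B \ A) ∩ T) + #(btw ends (B \ A) (A ∪ B)ᶜ ∩ T) := by
  have hai : Disjoint (A \ B) (A ∩ B) := by grind [disjoint_left, mem_compl]
  have hab : Disjoint (A \ B) (B \ A) := by grind [disjoint_left, mem_compl]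
  have hao : Disjoint (A \ B) (A ∪ B)ᶜ := by grind [disjoint_left, mem_compl]
  have hib : Disjoint (A ∩ B) (B \ A) := by grind [disjoint_left, mem_compl]
  have hio : Disjoint (A ∩ B) (A ∪ B)ᶜ := by grind [disjoint_left, mem_compl]
  have hbo : Disjoint (B \ A) (A ∪ B)ᶜ := by grind [disjoint_left, mem_compl]
  have hA : A \ B ∪ A ∩ B = A := by grind
  have hB : A ∩ B ∪ B \ A = B := by grind
  have hAc : (A \ B ∪ A ∩ B)ᶜ = B \ A ∪ (A ∪ B)ᶜ := by grind [mem_compl]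
  have hBc : (A ∩ B ∪ B \ A)ᶜ = A \ B ∪ (A ∪ B)ᶜ := by grind [mem_compl]
  have hoc : (A ∪ B)ᶜᶜ = A \ B ∪ A ∩ B ∪ B \ A := by grind [mem_compl]
  have hic : (A ∩ B)ᶜ = A \ B ∪ B \ A ∪ (A ∪ B)ᶜ := by grind [mem_compl]
  have hac : (A \ B)ᶜ = A ∩ B ∪ B \ A ∪ (A ∪ B)ᶜ := by grind [mem_compl]
  have hbc : (B \ A)ᶜ = A ∩ B ∪ A \ B ∪ (A ∪ B)ᶜ := by grind [mem_compl]
  refine ⟨?_, ?_, ?_, ?_, ?_, ?_⟩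
  · have := card_cutOf_union_inter_eq_of_compl_eq ends hAc hai hbo T
    rwa [hA] at this
  · have := card_cutOf_union_inter_eq_of_compl_eq ends hBc hib hao T
    rwa [hB, btw_comm ends (B \ A) (A \ B)] at this
  · rw [← cutOf_compl, card_cutOf_inter_eq_of_compl_eq ends hoc hai hab hib,
      btw_comm ends _ (A \ B), btw_comm ends _ (A ∩ B), btw_comm ends _ (B \ A)]
  · exact card_cutOf_inter_eq_of_compl_eq ends hic hab hao hbo T
  · rw [card_cutOf_inter_eq_of_compl_eq ends hac hib hio hbo, btw_comm ends (A \ B) (A ∩ B)]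
  · rw [card_cutOf_inter_eq_of_compl_eq ends hbc hai.symm hio hao, btw_comm ends (B \ A) (A ∩ B),
      btw_comm ends (B \ A) (A \ B)]

theorem btw_corners_of_card_cutOf_eq {p : ℕ} (hp : Even p)
    (hA : #(cutOf ends A) = p + 2) (hB : #(cutOf ends B) = p + 2)
    (hU : #(cutOf ends (A ∪ B)) = p + 2) (hI : #(cutOf ends (A ∩ B)) = p + 2)
    (hD : #(cutOf ends (A \ B)) = p + 2) (hE : #(cutOf ends (B \ A)) = p + 2) :
    btw ends (A \ B) (B \ A) = ∅ ∧ btw ends (A ∩ B) (A ∪ B)ᶜ = ∅ ∧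
    #(btw ends (A ∩ B) (A \ B)) = p / 2 + 1 ∧ #(btw ends (A ∩ B) (B \ A)) = p / 2 + 1 ∧
    #(btw ends (A \ B) (A ∪ B)ᶜ) = p / 2 + 1 ∧ #(btw ends (B \ A) (A ∪ B)ᶜ) = p / 2 + 1 := by
  obtain ⟨cA, cB, cU, cI, cD, cE⟩ := card_cutOf_corners_inter ends A B univ
  simp only [inter_univ] at cA cB cU cI cD cE
  obtain ⟨k, rfl⟩ := hp
  exact ⟨card_eq_zero.1 (by omega), card_eq_zero.1 (by omega), by omega, by omega, by omega,
    by omega⟩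

theorem violatedSet_corners {p : ℕ} {U : Finset E}
    (hA : violatedSet p ends U A) (hB : violatedSet p ends U B)
    (hU : #(cutOf ends (A ∪ B)) = p + 2) (hI : #(cutOf ends (A ∩ B)) = p + 2)
    (hD : #(cutOf ends (A \ B)) = p + 2) (hE : #(cutOf ends (B \ A)) = p + 2)
    (hab : btw ends (A \ B) (B \ A) = ∅) (hio : btw ends (A ∩ B) (A ∪ B)ᶜ = ∅) :
    (violatedSet p ends U (A ∪ B) ∨ violatedSet p ends U (A ∩ B)) ∧
      (violatedSet p ends U (A \ B) ∨ violatedSet p ends U (B \ A)) := by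
  obtain ⟨uA, uB, uU, uI, uD, uE⟩ := card_cutOf_corners_inter ends A B U
  simp only [hab, hio, empty_inter, card_empty, add_zero, zero_add] at uA uB uU uI uD uE
  unfold violatedSet at hA hB ⊢
  omega

end Corners

theorem stmt8_general [Fintype V] [Fintype E] [DecidableEq V] [DecidableEq E]
    (p : ℕ) (heven : Even p) (ends : E → V × V) (U : Finset E)
    (A B : Finset V)
    (hA : violatedSet p ends U A) (hB : violatedSet p ends U B)
    (h1 : (cutOf ends (A ∪ B)).card = p + 2) (h2 : (cutOf ends (A ∩ B)).card = p + 2)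
    (h3 : (cutOf ends (A \ B)).card = p + 2) (h4 : (cutOf ends (B \ A)).card = p + 2) :
    btw ends (A \ B) (B \ A) = ∅ ∧
    btw ends (A ∩ B) (A ∪ B)ᶜ = ∅ ∧
    (btw ends (A ∩ B) (A \ B)).card = p / 2 + 1 ∧
    (btw ends (A ∩ B) (B \ A)).card = p / 2 + 1 ∧
    (btw ends (A \ B) (A ∪ B)ᶜ).card = p / 2 + 1 ∧
    (btw ends (B \ A) (A ∪ B)ᶜ).card = p / 2 + 1 ∧
    2 ≤ ((if violatedSet p ends U (A ∪ B) then 1 else 0) +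
      (if violatedSet p ends U (A ∩ B) then 1 else 0) +
      (if violatedSet p ends U (A \ B) then 1 else 0) +
      (if violatedSet p ends U (B \ A) then 1 else 0) : ℕ) := by
  obtain ⟨hab, hio, hia, hib, hao, hbo⟩ :=
    btw_corners_of_card_cutOf_eq ends A B heven hA.1 hB.1 h1 h2 h3 h4
  obtain ⟨hUI, hDE⟩ := violatedSet_corners ends A B hA hB h1 h2 h3 h4 hab hio
  refine ⟨hab, hio, hia, hib, hao, hbo, ?_⟩
  split_ifs <;> tauto

theorem stmt8 [Fintype V] [Fintype E] [DecidableEq V] [DecidableEq E]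
    (p : ℕ) (hp : 2 ≤ p) (heven : Even p) (ends : E → V × V) (U : Finset E)
    (hflex : flexConn p ends U) (A B : Finset V)
    (hA : violatedSet p ends U A) (hB : violatedSet p ends U B)
    (hcross : crosses A B)
    (h1 : (cutOf ends (A ∪ B)).card = p + 2) (h2 : (cutOf ends (A ∩ B)).card = p + 2)
    (h3 : (cutOf ends (A \ B)).card = p + 2) (h4 : (cutOf ends (B \ A)).card = p + 2) :
    btw ends (A \ B) (B \ A) = ∅ ∧
    btw ends (A ∩ B) (A ∪ B)ᶜ = ∅ ∧
    (btw ends (A ∩ B) (A \ B)).card = p / 2 + 1 ∧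
    (btw ends (A ∩ B) (B \ A)).card = p / 2 + 1 ∧
    (btw ends (A \ B) (A ∪ B)ᶜ).card = p / 2 + 1 ∧
    (btw ends (B \ A) (A ∪ B)ᶜ).card = p / 2 + 1 ∧
    2 ≤ ((if violatedSet p ends U (A ∪ B) then 1 else 0) +
      (if violatedSet p ends U (A ∩ B) then 1 else 0) +
      (if violatedSet p ends U (A \ B) then 1 else 0) +
      (if violatedSet p ends U (B \ A) then 1 else 0) : ℕ) :=
  stmt8_general p heven ends U A B hA hB h1 h2 h3 h4
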